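/- Let G ∈ ℝ^{N×N} be symmetric positive definite, let A ∈ ℝ^{N×N} satisfy GᵀA + AᵀG − 2GᵀG ≺ 0, let c ≥ 0, let λ_m > 0, let λ ≥ λ_m, and let ω ≥ (1/λ_m)·(1 + c/(λ_m·λmin(GᵀG))). Then λ·(GᵀA − ωλ·GᵀG) + c·I_N ≺ 0, i.e., xᵀ[λ(GᵀA − ωλGᵀG) + cI_N]x < 0 for every nonzero x ∈ ℝ^N. -/

import Mathlib

/-!
Write `Q = GᵀG`, `t = ⟨Gx, Ax⟩` and `P = ⟨Gx, Gx⟩ = xᵀQx`. The hypothesis on `A` says `t < P`,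
and in particular `Gx ≠ 0` for `x ≠ 0`, so `Q` is positive definite and `P ≥ λmin(Q)‖x‖²` with
`λmin(Q) > 0`. The bound on `ω` is equivalent to `c ≤ λ_m λmin(Q)(ωλ_m - 1)`; as `c ≥ 0` forces
`ωλ_m ≥ 1`, the right-hand side only grows when `λ_m` is replaced by `λ`. Hence
`λ(t - ωλP) + c‖x‖² < c‖x‖² - λ(ωλ - 1)P ≤ (c - λ λmin(Q)(ωλ - 1))‖x‖² ≤ 0`.
-/

open Matrix

/-- Smallest real eigenvalue of a real square matrix. -/
noncomputable def lmin {n : Type*} [Fintype n] (M : Matrix n n ℝ) : ℝ :=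
  sInf {μ : ℝ | ∃ x : n → ℝ, x ≠ 0 ∧ M.mulVec x = μ • x}

open scoped MatrixOrder

namespace Matrix

variable {n : Type*} [Fintype n]

theorem dotProduct_transpose_mul_mulVec {m R : Type*} [Fintype m] [CommSemiring R]
    (G B : Matrix m n R) (x : n → R) :
    x ⬝ᵥ (Gᵀ * B) *ᵥ x = (G *ᵥ x) ⬝ᵥ (B *ᵥ x) := by
  rw [← mulVec_mulVec, dotProduct_mulVec, vecMul_transpose]

variable [DecidableEq n] {M : Matrix n n ℝ}

theorem setOf_hasEigenvector_eq_spectrum (M : Matrix n n ℝ) :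
    {μ : ℝ | ∃ x : n → ℝ, x ≠ 0 ∧ M *ᵥ x = μ • x} = spectrum ℝ M := by
  ext μ
  rw [← spectrum_toLin', ← Module.End.hasEigenvalue_iff_mem_spectrum]
  constructor
  · rintro ⟨x, hx, hMx⟩
    exact Module.End.hasEigenvalue_of_hasEigenvector ⟨Module.End.mem_eigenspace_iff.mpr hMx, hx⟩
  · intro hμ
    obtain ⟨x, hx_mem, hx_ne⟩ := hμ.exists_hasEigenvector
    exact ⟨x, hx_ne, Module.End.mem_eigenspace_iff.mp hx_mem⟩

theorem lmin_eq_sInf_spectrum (M : Matrix n n ℝ) : lmin M = sInf (spectrum ℝ M) := by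
  rw [lmin, setOf_hasEigenvector_eq_spectrum]

theorem lmin_le_of_mem_spectrum {μ : ℝ} (hμ : μ ∈ spectrum ℝ M) : lmin M ≤ μ :=
  lmin_eq_sInf_spectrum M ▸ csInf_le M.finite_real_spectrum.bddBelow hμ

theorem IsHermitian.lmin_mul_dotProduct_self_le (hM : M.IsHermitian) (x : n → ℝ) :
    lmin M * (x ⬝ᵥ x) ≤ x ⬝ᵥ M *ᵥ x := by
  have hle : algebraMap ℝ (Matrix n n ℝ) (lmin M) ≤ M :=
    (algebraMap_le_iff_le_spectrum hM).mpr fun _ => lmin_le_of_mem_spectrum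
  simpa [Algebra.algebraMap_eq_smul_one, sub_mulVec, smul_mulVec, dotProduct_sub, sub_nonneg]
    using (le_iff.mp hle).dotProduct_mulVec_nonneg x

theorem PosDef.lmin_pos [Nonempty n] (hM : M.PosDef) : 0 < lmin M := by
  have hmem : lmin M ∈ Set.range hM.1.eigenvalues := by
    rw [lmin_eq_sInf_spectrum, hM.1.spectrum_real_eq_range_eigenvalues]
    exact (Set.range_nonempty _).csInf_mem (Set.finite_range _)
  obtain ⟨i, hi⟩ := hmem
  exact hi ▸ hM.eigenvalues_pos i

end Matrix

section QuadraticForms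

variable {N : Type*} [Fintype N] (G A : Matrix N N ℝ) (x : N → ℝ)

theorem dotProduct_transpose_mul_add_sub_mulVec :
    x ⬝ᵥ (Gᵀ * A + Aᵀ * G - (2 : ℝ) • (Gᵀ * G)) *ᵥ x
      = 2 * ((G *ᵥ x) ⬝ᵥ (A *ᵥ x) - (G *ᵥ x) ⬝ᵥ (G *ᵥ x)) := by
  simp only [sub_mulVec, add_mulVec, smul_mulVec, dotProduct_sub, dotProduct_add,
    dotProduct_smul, smul_eq_mul, dotProduct_transpose_mul_mulVec, dotProduct_comm (A *ᵥ x)]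
  ring

theorem dotProduct_smul_sub_smul_add_smul_one_mulVec [DecidableEq N] (lam ω c : ℝ) :
    x ⬝ᵥ (lam • (Gᵀ * A - (ω * lam) • (Gᵀ * G)) + c • (1 : Matrix N N ℝ)) *ᵥ x
      = lam * ((G *ᵥ x) ⬝ᵥ (A *ᵥ x) - ω * lam * (G *ᵥ x) ⬝ᵥ (G *ᵥ x)) + c * (x ⬝ᵥ x) := by
  simp only [add_mulVec, sub_mulVec, smul_mulVec, one_mulVec, dotProduct_add, dotProduct_sub,
    dotProduct_smul, smul_eq_mul, dotProduct_transpose_mul_mulVec]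

variable {G A} in
theorem mulVec_injective_of_transpose_mul_add_sub_negDef
    (hGA : ∀ x : N → ℝ, x ≠ 0 → x ⬝ᵥ (Gᵀ * A + Aᵀ * G - (2 : ℝ) • (Gᵀ * G)) *ᵥ x < 0) :
    Function.Injective G.mulVec := by
  refine (injective_iff_map_eq_zero G.mulVecLin).mpr fun x hGx => ?_
  rw [mulVecLin_apply] at hGx
  by_contra hx
  have hneg := hGA x hx
  rw [dotProduct_transpose_mul_add_sub_mulVec, hGx] at hneg
  simp at hneg

end QuadraticForms

theorem le_mul_mul_sub_one_of_le {c μ lamm lam ω : ℝ} (hμ : 0 < μ) (hc : 0 ≤ c)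
    (hlamm : 0 < lamm) (hlam : lamm ≤ lam) (hω : 1 / lamm * (1 + c / (lamm * μ)) ≤ ω) :
    c ≤ lam * μ * (ω * lam - 1) := by
  have hpos : 0 < lamm * μ := mul_pos hlamm hμ
  have hω' : lamm * μ + c ≤ ω * lamm * (lamm * μ) := by
    have hscale : 1 / lamm * (1 + c / (lamm * μ)) * (lamm * (lamm * μ)) = lamm * μ + c := by
      field_simp
    nlinarith [mul_le_mul_of_nonneg_right hω (mul_pos hlamm hpos).le]
  have h1 : 1 ≤ ω * lamm := (le_mul_iff_one_le_left hpos).mp (by linarith)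
  calc c ≤ lamm * μ * (ω * lamm - 1) := by linarith
    _ ≤ lam * μ * (ω * lam - 1) := by gcongr <;> nlinarith

theorem mul_sub_mul_mul_add_mul_neg {t P s μ c lam ω : ℝ} (ht : t < P) (hP : μ * s ≤ P)
    (hs : 0 < s) (hμ : 0 < μ) (hc : 0 ≤ c) (hlam : 0 < lam) (hcμ : c ≤ lam * μ * (ω * lam - 1)) :
    lam * (t - ω * lam * P) + c * s < 0 := by
  have hgain : 0 ≤ lam * (ω * lam - 1) := by nlinarith
  calc lam * (t - ω * lam * P) + c * s < lam * (P - ω * lam * P) + c * s := by gcongr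
    _ = c * s - lam * (ω * lam - 1) * P := by ring
    _ ≤ c * s - lam * (ω * lam - 1) * (μ * s) := by gcongr
    _ = (c - lam * μ * (ω * lam - 1)) * s := by ring
    _ ≤ 0 := mul_nonpos_of_nonpos_of_nonneg (by linarith) hs.le

theorem stmt6_general {N : ℕ} (G A : Matrix (Fin N) (Fin N) ℝ)
    (hGA : ∀ x : Fin N → ℝ, x ≠ 0 →
      x ⬝ᵥ (Gᵀ * A + Aᵀ * G - (2 : ℝ) • (Gᵀ * G)).mulVec x < 0)
    (c : ℝ) (hc : 0 ≤ c) (lam lamm : ℝ) (hlamm : 0 < lamm) (hlam : lamm ≤ lam)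
    (ω : ℝ) (hω : (1 / lamm) * (1 + c / (lamm * lmin (Gᵀ * G))) ≤ ω) :
    ∀ x : Fin N → ℝ, x ≠ 0 →
      x ⬝ᵥ (lam • (Gᵀ * A - (ω * lam) • (Gᵀ * G))
            + c • (1 : Matrix (Fin N) (Fin N) ℝ)).mulVec x < 0 := by
  intro x hx
  obtain ⟨i, -⟩ := Function.ne_iff.mp hx
  have : Nonempty (Fin N) := ⟨i⟩
  have hQ : (Gᵀ * G).PosDef := by
    simpa [conjTranspose_eq_transpose_of_trivial] using
      PosDef.conjTranspose_mul_self G (mulVec_injective_of_transpose_mul_add_sub_negDef hGA)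
  have hP := hQ.1.lmin_mul_dotProduct_self_le x
  rw [dotProduct_transpose_mul_mulVec] at hP
  have ht : (G *ᵥ x) ⬝ᵥ (A *ᵥ x) < (G *ᵥ x) ⬝ᵥ (G *ᵥ x) := by
    have hneg := hGA x hx
    rw [dotProduct_transpose_mul_add_sub_mulVec] at hneg
    linarith
  rw [dotProduct_smul_sub_smul_add_smul_one_mulVec]
  exact mul_sub_mul_mul_add_mul_neg ht hP (by simpa using dotProduct_star_self_pos_iff.mpr hx)
    hQ.lmin_pos hc (hlamm.trans_le hlam) (le_mul_mul_sub_one_of_le hQ.lmin_pos hc hlamm hlam hω)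

/-- Block-wise negative definiteness estimate: if `GᵀA + AᵀG − 2GᵀG ≺ 0`, `c ≥ 0`,
`λ ≥ λ_m > 0` and `ω ≥ (1/λ_m)(1 + c/(λ_m λmin(GᵀG)))`, then
`λ(GᵀA − ωλ GᵀG) + c I ≺ 0`. -/
theorem stmt6 {N : ℕ} (G A : Matrix (Fin N) (Fin N) ℝ)
    (hG : G.PosDef)
    (hGA : ∀ x : Fin N → ℝ, x ≠ 0 →
      x ⬝ᵥ (Gᵀ * A + Aᵀ * G - (2 : ℝ) • (Gᵀ * G)).mulVec x < 0)
    (c : ℝ) (hc : 0 ≤ c) (lam lamm : ℝ) (hlamm : 0 < lamm) (hlam : lamm ≤ lam)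
    (ω : ℝ) (hω : (1 / lamm) * (1 + c / (lamm * lmin (Gᵀ * G))) ≤ ω) :
    ∀ x : Fin N → ℝ, x ≠ 0 →
      x ⬝ᵥ (lam • (Gᵀ * A - (ω * lam) • (Gᵀ * G))
            + c • (1 : Matrix (Fin N) (Fin N) ℝ)).mulVec x < 0 :=
  stmt6_general G A hGA c hc lam lamm hlamm hlam ω hω
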